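/- For positive reals γ, c and formal variables u, v, the double generating function ∑_{k≥1} ∑_{l≥1} (∑_{n=1}^{min(k,l)} n·C(k,n)·C(l,n)·c^n·γ^{k+l-n}) u^k v^l equals cγuv / ((1-γu)(1-γv) - cγuv)². -/

import Mathlib

/-!
Let `pₙ(k) = C(k,n) γ^(k-n)` be the coefficient of `uᵏ` in `uⁿ / (1 - γu)ⁿ⁺¹`. Multiplying by
`1 - γu` turns `uⁿ / (1 - γu)ⁿ⁺¹` into `u · uⁿ⁻¹ / (1 - γu)ⁿ` for `n ≥ 1` and into `1` for `n = 0`,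
so multiplying `∑ₙ wₙ pₙ(k) pₙ(l) uᵏ vˡ` by `(1 - γu)(1 - γv)` gives
`w₀ + uv · ∑ₙ wₙ₊₁ pₙ(k) pₙ(l) uᵏ vˡ`. With `D = (1 - γu)(1 - γv) - cγuv`, the weights `(cγ)ⁿ`
therefore give a series `A` with `A · D = 1`, and the weights `n (cγ)ⁿ`, which give the series `F`
of the theorem, satisfy `F · D = cγuv · A`. Hence `F = cγuv / D²`.
-/

open MvPowerSeries

/-- The double generating function
`∑_{k≥1} ∑_{l≥1} (∑_{n=1}^{min(k,l)} n·C(k,n)·C(l,n)·c^n·γ^{k+l-n}) u^k v^l`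
as a formal power series in `u = X 0`, `v = X 1` over `ℝ`. -/
noncomputable def covGenSeries (γ c : ℝ) : MvPowerSeries (Fin 2) ℝ :=
  fun m =>
    if 1 ≤ m 0 ∧ 1 ≤ m 1 then
      ∑ n ∈ Finset.Icc 1 (min (m 0) (m 1)),
        (n : ℝ) * ((m 0).choose n) * ((m 1).choose n) * c ^ n * γ ^ (m 0 + m 1 - n)
    else 0

open Finset

section

variable {R : Type*} [CommRing R]

def bivariate : (ℕ → ℕ → R) →ₗ[R] MvPowerSeries (Fin 2) R where
  toFun f m := f (m 0) (m 1)
  map_add' _ _ := rfl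
  map_smul' _ _ := rfl

@[simp]
lemma coeff_bivariate (f : ℕ → ℕ → R) (m : Fin 2 →₀ ℕ) :
    coeff m (bivariate f) = f (m 0) (m 1) := rfl

def shiftFst (f : ℕ → ℕ → R) : ℕ → ℕ → R
  | 0, _ => 0
  | k + 1, l => f k l

def shiftSnd (f : ℕ → ℕ → R) : ℕ → ℕ → R
  | _, 0 => 0
  | k, l + 1 => f k l

lemma coeff_X_mul {σ : Type*} [DecidableEq σ] (i : σ) (φ : MvPowerSeries σ R)
    (m : σ →₀ ℕ) :
    coeff m (X i * φ) = if m i = 0 then 0 else coeff (m - Finsupp.single i 1) φ := by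
  rw [X_def, coeff_monomial_mul, one_mul]
  by_cases h : m i = 0 <;> simp [h, Finsupp.single_le_iff, Nat.one_le_iff_ne_zero]

lemma X_zero_mul_bivariate (f : ℕ → ℕ → R) :
    X 0 * bivariate f = bivariate (shiftFst f) := by
  ext m
  rw [coeff_X_mul, coeff_bivariate, coeff_bivariate]
  rcases h : m 0 with _ | k <;> simp [h, shiftFst]

lemma X_one_mul_bivariate (f : ℕ → ℕ → R) :
    X 1 * bivariate f = bivariate (shiftSnd f) := by
  ext m
  rw [coeff_X_mul, coeff_bivariate, coeff_bivariate]
  rcases h : m 1 with _ | l <;> simp [h, shiftSnd]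

lemma C_eq_bivariate (a : R) :
    (C a : MvPowerSeries (Fin 2) R) = bivariate (fun k l => if k = 0 ∧ l = 0 then a else 0) := by
  ext m
  rw [coeff_C, coeff_bivariate]
  congr 1
  simp [Finsupp.ext_iff, Fin.forall_fin_two]

/-- The coefficient of `u ^ k` in `u ^ n / (1 - γ u) ^ (n + 1)`. -/
def binomTerm (γ : R) (n k : ℕ) : R := k.choose n * γ ^ (k - n)

@[simp]
lemma binomTerm_zero (γ : R) (k : ℕ) : binomTerm γ 0 k = γ ^ k := by
  simp [binomTerm]

lemma binomTerm_of_lt (γ : R) {n k : ℕ} (h : k < n) : binomTerm γ n k = 0 := by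
  simp [binomTerm, Nat.choose_eq_zero_of_lt h]

lemma binomTerm_zero_succ_sub (γ : R) (k : ℕ) :
    binomTerm γ 0 (k + 1) - γ * binomTerm γ 0 k = 0 := by
  rw [binomTerm_zero, binomTerm_zero, pow_succ', sub_self]

lemma binomTerm_succ_succ_sub (γ : R) (n k : ℕ) :
    binomTerm γ (n + 1) (k + 1) - γ * binomTerm γ (n + 1) k = binomTerm γ n k := by
  rcases lt_or_ge k (n + 1) with h | h
  · rw [binomTerm_of_lt γ h, binomTerm, binomTerm, Nat.choose_succ_succ,
      Nat.choose_eq_zero_of_lt h]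
    simp
  · obtain ⟨t, rfl⟩ := Nat.exists_eq_add_of_le h
    simp only [binomTerm, Nat.choose_succ_succ, show n + 1 + t + 1 - (n + 1) = t + 1 by omega,
      show n + 1 + t - (n + 1) = t by omega, show n + 1 + t - n = t + 1 by omega]
    push_cast
    ring

def weightedSum (γ : R) (w : ℕ → R) (k l : ℕ) : R :=
  ∑ n ∈ range (k + 1), w n * binomTerm γ n k * binomTerm γ n l

lemma weightedSum_zero_left (γ : R) (w : ℕ → R) (l : ℕ) :
    weightedSum γ w 0 l = w 0 * γ ^ l := by
  simp [weightedSum]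

lemma weightedSum_zero_right (γ : R) (w : ℕ → R) (k : ℕ) :
    weightedSum γ w k 0 = w 0 * γ ^ k := by
  rw [weightedSum, sum_range_succ']
  simp [binomTerm_of_lt]

lemma weightedSum_eq_sum_range_succ_succ (γ : R) (w : ℕ → R) (k l : ℕ) :
    weightedSum γ w k l = ∑ n ∈ range (k + 2), w n * binomTerm γ n k * binomTerm γ n l := by
  rw [weightedSum, sum_range_succ _ (k + 1), binomTerm_of_lt γ k.lt_succ_self]
  simp

lemma weightedSum_succ_succ (γ : R) (w : ℕ → R) (k l : ℕ) :
    weightedSum γ w (k + 1) (l + 1) - γ * weightedSum γ w k (l + 1)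
        - γ * weightedSum γ w (k + 1) l + γ ^ 2 * weightedSum γ w k l
      = weightedSum γ (fun n => w (n + 1)) k l := by
  calc _ = ∑ n ∈ range (k + 2), w n * (binomTerm γ n (k + 1) - γ * binomTerm γ n k)
          * (binomTerm γ n (l + 1) - γ * binomTerm γ n l) := by
        rw [weightedSum, weightedSum_eq_sum_range_succ_succ γ w k (l + 1),
          weightedSum, weightedSum_eq_sum_range_succ_succ γ w k l]
        simp only [mul_sum, ← sum_sub_distrib, ← sum_add_distrib]
        exact sum_congr rfl fun n _ => by ring
    _ = _ := by
        rw [sum_range_succ']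
        simp only [binomTerm_succ_succ_sub, binomTerm_zero_succ_sub, mul_zero, add_zero,
          weightedSum, mul_assoc]

def weightedSeries (γ : R) (w : ℕ → R) : MvPowerSeries (Fin 2) R :=
  bivariate (weightedSum γ w)

lemma weightedSeries_add (γ : R) (w w' : ℕ → R) :
    weightedSeries γ (w + w') = weightedSeries γ w + weightedSeries γ w' := by
  rw [weightedSeries, weightedSeries, weightedSeries, ← map_add]
  congr 1
  funext k l
  simp [weightedSum, add_mul, sum_add_distrib]

lemma weightedSeries_smul (γ a : R) (w : ℕ → R) :
    weightedSeries γ (a • w) = C a * weightedSeries γ w := by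
  rw [weightedSeries, weightedSeries, ← smul_eq_C_mul, ← map_smul]
  congr 1
  funext k l
  simp [weightedSum, mul_sum, mul_assoc]

lemma weightedSeries_mul (γ : R) (w : ℕ → R) :
    weightedSeries γ w * ((1 - C γ * X 0) * (1 - C γ * X 1))
      = C (w 0) + X 0 * X 1 * weightedSeries γ (fun n => w (n + 1)) := by
  have expand : weightedSeries γ w * ((1 - C γ * X 0) * (1 - C γ * X 1))
      = weightedSeries γ w - γ • (X 0 * weightedSeries γ w) - γ • (X 1 * weightedSeries γ w)
        + γ ^ 2 • (X 0 * (X 1 * weightedSeries γ w)) := by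
    simp only [smul_eq_C_mul, map_pow]
    ring
  rw [expand, mul_assoc]
  simp only [weightedSeries, X_one_mul_bivariate, X_zero_mul_bivariate, C_eq_bivariate,
    ← map_smul, ← map_sub, ← map_add]
  congr 1
  funext k l
  rcases k with _ | k <;> rcases l with _ | l
  · simp [shiftFst, shiftSnd, weightedSum_zero_left]
  · simp [shiftFst, shiftSnd, weightedSum_zero_left]
    ring
  · simp [shiftFst, shiftSnd, weightedSum_zero_right]
    ring
  · simp [shiftFst, shiftSnd, ← weightedSum_succ_succ]

lemma weightedSeries_pow_mul (γ b : R) :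
    weightedSeries γ (b ^ ·) * ((1 - C γ * X 0) * (1 - C γ * X 1) - C b * (X 0 * X 1))
      = 1 := by
  have shift : weightedSeries γ (fun n => b ^ (n + 1)) = C b * weightedSeries γ (b ^ ·) := by
    rw [← weightedSeries_smul]
    congr 1
    funext n
    simp [pow_succ']
  rw [mul_sub, weightedSeries_mul, shift, pow_zero, map_one]
  ring

lemma weightedSeries_nat_mul_pow_mul (γ b : R) :
    weightedSeries γ (fun n => n * b ^ n) *
        ((1 - C γ * X 0) * (1 - C γ * X 1) - C b * (X 0 * X 1))
      = C b * X 0 * X 1 * weightedSeries γ (b ^ ·) := by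
  have shift : weightedSeries γ (fun n => ((n + 1 : ℕ) : R) * b ^ (n + 1))
      = C b * (weightedSeries γ (fun n => n * b ^ n) + weightedSeries γ (b ^ ·)) := by
    rw [← weightedSeries_add, ← weightedSeries_smul]
    congr 1
    funext n
    simp only [Pi.smul_apply, Pi.add_apply, smul_eq_mul]
    push_cast
    ring
  rw [mul_sub, weightedSeries_mul, shift, Nat.cast_zero, zero_mul, map_zero, zero_add]
  ring

lemma sum_Icc_choose_mul_choose_eq_weightedSum (γ c : R) (k l : ℕ) :
    ∑ n ∈ Icc 1 (min k l), (n : R) * k.choose n * l.choose n * c ^ n * γ ^ (k + l - n)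
      = weightedSum γ (fun n => n * (c * γ) ^ n) k l := by
  calc _ = ∑ n ∈ Icc 1 (min k l), n * (c * γ) ^ n * binomTerm γ n k * binomTerm γ n l := by
        refine sum_congr rfl fun n hn => ?_
        obtain ⟨a, rfl⟩ := Nat.exists_eq_add_of_le (le_min_iff.1 (mem_Icc.1 hn).2).1
        obtain ⟨b, rfl⟩ := Nat.exists_eq_add_of_le (le_min_iff.1 (mem_Icc.1 hn).2).2
        simp only [binomTerm, show n + a + (n + b) - n = n + a + b by omega,
          Nat.add_sub_cancel_left]
        ring
    _ = _ := by
        refine sum_subset (fun n hn => ?_) fun n hn hn' => ?_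
        · simp only [mem_Icc, mem_range] at hn ⊢
          omega
        · simp only [mem_Icc, mem_range, le_min_iff, not_and, not_le] at hn hn'
          rcases Nat.eq_zero_or_pos n with rfl | hpos
          · simp
          · simp [binomTerm_of_lt γ (hn' hpos (by omega))]

end

lemma covGenSeries_eq_weightedSeries (γ c : ℝ) :
    covGenSeries γ c = weightedSeries γ (fun n => n * (c * γ) ^ n) := by
  ext m
  rw [weightedSeries, coeff_bivariate, coeff_apply, covGenSeries]
  split_ifs with h
  · exact sum_Icc_choose_mul_choose_eq_weightedSum γ c (m 0) (m 1)
  · rcases Nat.eq_zero_or_pos (m 0) with h0 | h0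
    · simp [h0, weightedSum_zero_left]
    · simp [show m 1 = 0 by omega, weightedSum_zero_right]

theorem statement2 (γ c : ℝ) :
    covGenSeries γ c =
      (MvPowerSeries.C (c * γ) : MvPowerSeries (Fin 2) ℝ) * MvPowerSeries.X 0 * MvPowerSeries.X 1 *
        (((1 - (MvPowerSeries.C γ : MvPowerSeries (Fin 2) ℝ) * MvPowerSeries.X 0) *
            (1 - (MvPowerSeries.C γ : MvPowerSeries (Fin 2) ℝ) * MvPowerSeries.X 1) -
          (MvPowerSeries.C (c * γ) : MvPowerSeries (Fin 2) ℝ) *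
            (MvPowerSeries.X 0 * MvPowerSeries.X 1))⁻¹) ^ 2 := by
  have hD : constantCoeff ((1 - C γ * X 0) * (1 - C γ * X 1) - C (c * γ) * (X 0 * X 1) :
      MvPowerSeries (Fin 2) ℝ) ≠ 0 := by
    simp
  have hinv := (MvPowerSeries.eq_inv_iff_mul_eq_one hD).2 (weightedSeries_pow_mul γ (c * γ))
  rw [sq, ← mul_assoc, MvPowerSeries.eq_mul_inv_iff_mul_eq hD, covGenSeries_eq_weightedSeries,
    weightedSeries_nat_mul_pow_mul, hinv]
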